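/- Fractional Rademacher complexity of the kernel-based hypothesis class for (reweighted) univariate losses: let ℍ be a real Hilbert space and Φ : 𝒳 → ℍ with ⟨Φ(x), Φ(x)⟩ ≤ r² for all x ∈ 𝒳. Let K ≥ 1 and n ≥ 2, and for each k ∈ [K] let n_k⁺, n_k⁻ ≥ 1 with n_k⁺ + n_k⁻ = n, τ_k = min(n_k⁺, n_k⁻)/n, m_k = n_k⁺ n_k⁻, reweighting constants a_k⁺, a_k⁻ ≥ 0, and points (x⁺_{ki}, x⁻_{ki})_{i∈[m_k]} of 𝒳 × 𝒳. Let {(I_{kj}, ω_{kj})}_{j∈[J_k]} be a family with I_{kj} ⊆ [m_k] and ω_{kj} > 0 such that ∑_{j : i ∈ I_{kj}} ω_{kj} = 1 for every i ∈ [m_k] and ∑_{j∈[J_k]} ω_{kj} = max(n_k⁺, n_k⁻). Then (1/K) ∑_{k=1}^K 2^{−2m_k} ∑_{(σ⁺,σ⁻)∈{−1,1}^{m_k}×{−1,1}^{m_k}} (1/m_k) ∑_{j∈[J_k]} ω_{kj} · sup_{w∈ℍ, ‖w‖≤B} ∑_{i∈I_{kj}} ( σ⁺_i a_k⁺ ⟨w,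 Φ(x⁺_{ki})⟩ + σ⁻_i a_k⁻ ⟨w, Φ(x⁻_{ki})⟩ ) ≤ (B r / √n) · ( (1/K) ∑_{k=1}^K √(1/τ_k) · (a_k⁺ + a_k⁻) ). In particular, with a_k⁺ = n_k⁺/n and a_k⁻ = n_k⁻/n (the loss L_{u1}) the right-hand side is at most (B r / √n)( (1/K) ∑_k √(1/τ_k) ), and with a_k⁺ = a_k⁻ = 1 (the loss L_{u2}) it equals (2 B r / √n)( (1/K) ∑_k √(1/τ_k) ). -/

import Mathlib

open scoped BigOperators RealInnerProductSpace

/-! For each label, the supremum over the ball of radius `B` is at most `B‖U‖`, where `U` is the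
signed sum of the scaled features, and by Jensen the Rademacher average of `‖U‖` is at most
`√(∑ ‖uᵢ‖²) ≤ (a⁺ + a⁻) r √|Iⱼ|`, because distinct signs are uncorrelated. Cauchy–Schwarz and
the cover condition give `∑ⱼ ωⱼ √|Iⱼ| ≤ √(∑ⱼ ωⱼ) √(∑ⱼ ωⱼ |Iⱼ|) = √(max(n⁺, n⁻)) √m`, and since
`m = max(n⁺, n⁻) · min(n⁺, n⁻)` the label contributes `B r (a⁺ + a⁻) / √(min(n⁺, n⁻))`. -/

open Finset

section Rademacher

variable {H : Type*} [NormedAddCommGroup H] [InnerProductSpace ℝ H]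
  {κ : Type*} [Fintype κ] [DecidableEq κ]

lemma sum_sign_mul_sign_of_ne {i j : κ} (hij : i ≠ j) :
    ∑ σ : κ → Bool, (if σ i then (1 : ℝ) else -1) * (if σ j then (1 : ℝ) else -1) = 0 := by
  -- flipping the sign at `i` negates the summand
  refine sum_involution (fun σ _ => Function.update σ i (!σ i)) (fun σ _ => ?_)
    (fun σ _ _ h => ?_) (fun σ _ => mem_univ _) (fun σ _ => ?_)
  · rw [Function.update_self, Function.update_of_ne hij.symm]
    cases σ i <;> cases σ j <;> norm_num
  · simpa using congrFun h i
  · rw [Function.update_self, Function.update_idem, Bool.not_not, Function.update_eq_self]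

lemma sum_norm_sum_sign_smul_sq (t : Finset κ) (u : κ → H) :
    ∑ σ : κ → Bool, ‖∑ i ∈ t, (if σ i then (1 : ℝ) else -1) • u i‖ ^ 2
      = 2 ^ Fintype.card κ * ∑ i ∈ t, ‖u i‖ ^ 2 := by
  have hsq (b : Bool) : (if b then (1 : ℝ) else -1) * (if b then (1 : ℝ) else -1) = 1 := by
    cases b <;> norm_num
  calc ∑ σ : κ → Bool, ‖∑ i ∈ t, (if σ i then (1 : ℝ) else -1) • u i‖ ^ 2
      = ∑ i ∈ t, ∑ j ∈ t, (∑ σ : κ → Bool,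
          (if σ i then (1 : ℝ) else -1) * (if σ j then (1 : ℝ) else -1)) * ⟪u i, u j⟫ := by
        simp only [← real_inner_self_eq_norm_sq, sum_inner, inner_sum, real_inner_smul_left,
          real_inner_smul_right, sum_mul]
        rw [sum_comm]
        refine sum_congr rfl fun i _ => ?_
        rw [sum_comm]
        exact sum_congr rfl fun j _ => sum_congr rfl fun σ _ => by rw [real_inner_comm]; ring
    _ = ∑ i ∈ t, 2 ^ Fintype.card κ * ‖u i‖ ^ 2 := by
        refine sum_congr rfl fun i hi => ?_
        rw [sum_eq_single_of_mem i hi fun j _ hji => by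
          rw [sum_sign_mul_sign_of_ne hji.symm, zero_mul]]
        simp [hsq]
    _ = 2 ^ Fintype.card κ * ∑ i ∈ t, ‖u i‖ ^ 2 := (mul_sum _ _ _).symm

lemma sum_norm_sum_sign_smul_le (t : Finset κ) (u : κ → H) :
    ∑ σ : κ → Bool, ‖∑ i ∈ t, (if σ i then (1 : ℝ) else -1) • u i‖
      ≤ 2 ^ Fintype.card κ * √(∑ i ∈ t, ‖u i‖ ^ 2) := by
  have hcard : ∑ _σ : κ → Bool, (1 : ℝ) ^ 2 = 2 ^ Fintype.card κ := by simp
  calc ∑ σ : κ → Bool, ‖∑ i ∈ t, (if σ i then (1 : ℝ) else -1) • u i‖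
      = ∑ σ : κ → Bool, 1 * ‖∑ i ∈ t, (if σ i then (1 : ℝ) else -1) • u i‖ := by simp only [one_mul]
    _ ≤ √(∑ _σ : κ → Bool, (1 : ℝ) ^ 2) *
          √(∑ σ : κ → Bool, ‖∑ i ∈ t, (if σ i then (1 : ℝ) else -1) • u i‖ ^ 2) :=
        Real.sum_mul_le_sqrt_mul_sqrt _ _ _
    _ = 2 ^ Fintype.card κ * √(∑ i ∈ t, ‖u i‖ ^ 2) := by
        rw [hcard, sum_norm_sum_sign_smul_sq, Real.sqrt_mul (by positivity), ← mul_assoc,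
          Real.mul_self_sqrt (by positivity)]

lemma sum_norm_sum_sign_pair_smul_le (t : Finset κ) (u u' : κ → H) :
    ∑ σ : (κ → Bool) × (κ → Bool), ‖∑ i ∈ t,
        ((if σ.1 i then (1 : ℝ) else -1) • u i + (if σ.2 i then (1 : ℝ) else -1) • u' i)‖
      ≤ 2 ^ (2 * Fintype.card κ) * √(∑ i ∈ t, (‖u i‖ ^ 2 + ‖u' i‖ ^ 2)) := by
  have h := sum_norm_sum_sign_smul_le (t.disjSum t) (Sum.elim u u')
  rw [Fintype.card_sum, ← two_mul, sum_disjSum, ← sum_add_distrib] at h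
  refine le_of_eq_of_le ?_ h
  refine Fintype.sum_equiv (Equiv.sumArrowEquivProdArrow κ κ Bool).symm _ _ fun σ => ?_
  rw [sum_disjSum, ← sum_add_distrib]
  rfl

end Rademacher

section FractionalCover

variable {ι κ : Type*} [Fintype ι] [DecidableEq ι] [Fintype κ] {I : κ → Finset ι} {w : κ → ℝ}

lemma sum_mul_card_eq_card_of_cover
    (hcover : ∀ i, ∑ j ∈ univ.filter (fun j => i ∈ I j), w j = 1) :
    ∑ j, w j * #(I j) = Fintype.card ι := by
  calc ∑ j, w j * #(I j) = ∑ j, ∑ i, if i ∈ I j then w j else 0 := by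
        refine sum_congr rfl fun j _ => ?_
        rw [sum_ite_mem, univ_inter, sum_const, nsmul_eq_mul, mul_comm]
    _ = ∑ i, ∑ j, if i ∈ I j then w j else 0 := sum_comm
    _ = Fintype.card ι := by simp [← sum_filter, hcover]

lemma sum_mul_sqrt_card_le_of_cover (hw : ∀ j, 0 ≤ w j)
    (hcover : ∀ i, ∑ j ∈ univ.filter (fun j => i ∈ I j), w j = 1) :
    ∑ j, w j * √(#(I j) : ℝ) ≤ √(∑ j, w j) * √(Fintype.card ι) := by
  rw [← sum_mul_card_eq_card_of_cover hcover]
  calc ∑ j, w j * √(#(I j) : ℝ) = ∑ j, √(w j) * √(w j * #(I j)) := by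
        refine sum_congr rfl fun j _ => ?_
        rw [Real.sqrt_mul (hw j), ← mul_assoc, Real.mul_self_sqrt (hw j)]
    _ ≤ √(∑ j, w j) * √(∑ j, w j * #(I j)) :=
        Real.sum_sqrt_mul_sqrt_le _ hw fun j => mul_nonneg (hw j) (Nat.cast_nonneg _)

end FractionalCover

lemma iSup_inner_le_mul_norm {H : Type*} [NormedAddCommGroup H] [InnerProductSpace ℝ H]
    {B : ℝ} (hB : 0 ≤ B) (u : H) :
    ⨆ v : {v : H // ‖v‖ ≤ B}, ⟪(v : H), u⟫ ≤ B * ‖u‖ :=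
  haveI : Nonempty {v : H // ‖v‖ ≤ B} := ⟨⟨0, by simpa using hB⟩⟩
  ciSup_le fun v => (real_inner_le_norm _ _).trans (mul_le_mul_of_nonneg_right v.2 (norm_nonneg _))

lemma sum_norm_sum_sign_pair_feature_le {H X : Type*} [NormedAddCommGroup H]
    [InnerProductSpace ℝ H] (Φ : X → H) {r : ℝ} (hr : 0 ≤ r) (hΦ : ∀ x, ‖Φ x‖ ≤ r)
    {ι : Type*} [Fintype ι] [DecidableEq ι] {ap am : ℝ} (hap : 0 ≤ ap) (ham : 0 ≤ am)
    (xs : ι → X × X) (t : Finset ι) :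
    ∑ σ : (ι → Bool) × (ι → Bool), ‖∑ i ∈ t,
        ((if σ.1 i then (1 : ℝ) else -1) • ap • Φ (xs i).1
          + (if σ.2 i then (1 : ℝ) else -1) • am • Φ (xs i).2)‖
      ≤ 2 ^ (2 * Fintype.card ι) * ((ap + am) * r * √(#t : ℝ)) := by
  have hsmul {a : ℝ} (ha : 0 ≤ a) (x : X) : ‖a • Φ x‖ ^ 2 ≤ (a * r) ^ 2 := by
    rw [norm_smul, Real.norm_of_nonneg ha]
    gcongr
    exact hΦ x
  have hfeat : ∑ i ∈ t, (‖ap • Φ (xs i).1‖ ^ 2 + ‖am • Φ (xs i).2‖ ^ 2)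
      ≤ #t * ((ap + am) * r) ^ 2 := by
    rw [← nsmul_eq_mul, ← sum_const]
    refine sum_le_sum fun i _ => ?_
    nlinarith [hsmul hap (xs i).1, hsmul ham (xs i).2,
      mul_nonneg (mul_nonneg hap ham) (sq_nonneg r)]
  refine (sum_norm_sum_sign_pair_smul_le t _ _).trans ?_
  calc (2 : ℝ) ^ (2 * Fintype.card ι)
          * √(∑ i ∈ t, (‖ap • Φ (xs i).1‖ ^ 2 + ‖am • Φ (xs i).2‖ ^ 2))
      ≤ 2 ^ (2 * Fintype.card ι) * √(#t * ((ap + am) * r) ^ 2) := by gcongr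
    _ = 2 ^ (2 * Fintype.card ι) * ((ap + am) * r * √(#t : ℝ)) := by
      rw [Real.sqrt_mul (Nat.cast_nonneg _), Real.sqrt_sq (by positivity), mul_comm (√_)]

lemma fracRad_label_le {H X : Type*} [NormedAddCommGroup H] [InnerProductSpace ℝ H]
    (Φ : X → H) {r : ℝ} (hr : 0 ≤ r) (hΦ : ∀ x, ‖Φ x‖ ≤ r)
    {ι κ : Type*} [Fintype ι] [DecidableEq ι] [Fintype κ]
    {ap am : ℝ} (hap : 0 ≤ ap) (ham : 0 ≤ am) (xs : ι → X × X)
    (I : κ → Finset ι) (w : κ → ℝ) (hw : ∀ j, 0 ≤ w j)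
    (hcover : ∀ i, ∑ j ∈ univ.filter (fun j => i ∈ I j), w j = 1) {B : ℝ} (hB : 0 ≤ B) :
    ((2 : ℝ) ^ (2 * Fintype.card ι))⁻¹ * ∑ σ : (ι → Bool) × (ι → Bool),
        (Fintype.card ι : ℝ)⁻¹ * ∑ j, w j * ⨆ v : {v : H // ‖v‖ ≤ B}, ∑ i ∈ I j,
          ((if σ.1 i then (1 : ℝ) else -1) * (ap * ⟪(v : H), Φ (xs i).1⟫)
            + (if σ.2 i then (1 : ℝ) else -1) * (am * ⟪(v : H), Φ (xs i).2⟫))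
      ≤ B * r * (ap + am) * √((∑ j, w j) / Fintype.card ι) := by
  set m := Fintype.card ι
  set c : ℝ := ((2 : ℝ) ^ (2 * m))⁻¹
  set U : (ι → Bool) × (ι → Bool) → κ → H := fun σ j => ∑ i ∈ I j,
    ((if σ.1 i then (1 : ℝ) else -1) • ap • Φ (xs i).1
      + (if σ.2 i then (1 : ℝ) else -1) • am • Φ (xs i).2)
  have hsup (σ j) : ⨆ v : {v : H // ‖v‖ ≤ B}, ∑ i ∈ I j,
      ((if σ.1 i then (1 : ℝ) else -1) * (ap * ⟪(v : H), Φ (xs i).1⟫)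
        + (if σ.2 i then (1 : ℝ) else -1) * (am * ⟪(v : H), Φ (xs i).2⟫)) ≤ B * ‖U σ j‖ := by
    simpa only [U, inner_sum, inner_add_right, real_inner_smul_right]
      using iSup_inner_le_mul_norm hB (U σ j)
  have havg (j) : c * ∑ σ, ‖U σ j‖ ≤ (ap + am) * r * √(#(I j) : ℝ) :=
    (inv_mul_le_iff₀ (by positivity)).2
      (sum_norm_sum_sign_pair_feature_le Φ hr hΦ hap ham xs (I j))
  calc c * ∑ σ : (ι → Bool) × (ι → Bool), (m : ℝ)⁻¹ * ∑ j, w j *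
          ⨆ v : {v : H // ‖v‖ ≤ B}, ∑ i ∈ I j,
          ((if σ.1 i then (1 : ℝ) else -1) * (ap * ⟪(v : H), Φ (xs i).1⟫)
            + (if σ.2 i then (1 : ℝ) else -1) * (am * ⟪(v : H), Φ (xs i).2⟫))
      ≤ c * ∑ σ : (ι → Bool) × (ι → Bool), (m : ℝ)⁻¹ * ∑ j, w j * (B * ‖U σ j‖) := by
        gcongr with σ _ j _
        · exact hw j
        · exact hsup σ j
    _ = (m : ℝ)⁻¹ * B * ∑ j, w j * (c * ∑ σ, ‖U σ j‖) := by
        simp only [mul_sum]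
        rw [sum_comm]
        exact sum_congr rfl fun j _ => sum_congr rfl fun σ _ => by ring
    _ ≤ (m : ℝ)⁻¹ * B * ∑ j, w j * ((ap + am) * r * √(#(I j) : ℝ)) := by
        gcongr (m : ℝ)⁻¹ * B * ∑ j, w j * ?_ with j
        · exact hw j
        · exact havg j
    _ = (m : ℝ)⁻¹ * B * (ap + am) * r * ∑ j, w j * √(#(I j) : ℝ) := by
        rw [mul_sum, mul_sum]
        exact sum_congr rfl fun j _ => by ring
    _ ≤ (m : ℝ)⁻¹ * B * (ap + am) * r * (√(∑ j, w j) * √(m : ℝ)) := by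
        gcongr
        exact sum_mul_sqrt_card_le_of_cover hw hcover
    _ = B * r * (ap + am) * √((∑ j, w j) / m) := by
        rw [Real.sqrt_div' _ (Nat.cast_nonneg _), div_eq_mul_one_div _ (√(m : ℝ)),
          ← Real.sqrt_div_self']
        ring

lemma sqrt_max_div_mul_eq {p q n : ℝ} (hp : 0 < p) (hq : 0 < q) (hn : 0 < n) :
    √(max p q / (p * q)) = √(1 / (min p q / n)) / √n := by
  have hmax : 0 < max p q := lt_max_of_lt_left hp
  have hmin : 0 < min p q := lt_min hp hq
  rw [← Real.sqrt_div' _ hn.le, ← max_mul_min p q]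
  congr 1
  field_simp

theorem fracRad_kernel_univariate_general
    {H X : Type*} [NormedAddCommGroup H] [InnerProductSpace ℝ H]
    (Φ : X → H) (r : ℝ) (hr : 0 < r) (hΦ : ∀ x, ⟪Φ x, Φ x⟫ ≤ r ^ 2)
    (K n : ℕ) (hn : 2 ≤ n)
    (np nm : Fin K → ℕ) (hnp : ∀ k, 1 ≤ np k) (hnm : ∀ k, 1 ≤ nm k)
    (hsum : ∀ k, np k + nm k = n)
    (ap am : Fin K → ℝ) (hap : ∀ k, 0 ≤ ap k) (ham : ∀ k, 0 ≤ am k)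
    (xs : (k : Fin K) → Fin (np k * nm k) → X × X)
    (J : Fin K → ℕ)
    (I : (k : Fin K) → Fin (J k) → Finset (Fin (np k * nm k)))
    (w : (k : Fin K) → Fin (J k) → ℝ) (hw : ∀ k j, 0 < w k j)
    (hcover : ∀ k (i : Fin (np k * nm k)),
      ∑ j ∈ Finset.univ.filter (fun j => i ∈ I k j), w k j = 1)
    (hchrom : ∀ k, ∑ j, w k j = (max (np k) (nm k) : ℝ))
    (B : ℝ) (hB : 0 ≤ B) :
    ((K : ℝ)⁻¹ * ∑ k : Fin K,
        ((2 : ℝ) ^ (2 * (np k * nm k)))⁻¹ *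
          ∑ σ : (Fin (np k * nm k) → Bool) × (Fin (np k * nm k) → Bool),
            ((np k * nm k : ℕ) : ℝ)⁻¹ * ∑ j : Fin (J k), w k j *
              ⨆ v : {v : H // ‖v‖ ≤ B}, ∑ i ∈ I k j,
                ((if σ.1 i then (1 : ℝ) else -1) * (ap k * ⟪(v : H), Φ (xs k i).1⟫)
                  + (if σ.2 i then (1 : ℝ) else -1) * (am k * ⟪(v : H), Φ (xs k i).2⟫))
      ≤ B * r / Real.sqrt n *
          ((K : ℝ)⁻¹ * ∑ k : Fin K,
            Real.sqrt (1 / ((min (np k) (nm k) : ℝ) / n)) * (ap k + am k))) ∧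
    (B * r / Real.sqrt n *
        ((K : ℝ)⁻¹ * ∑ k : Fin K,
          Real.sqrt (1 / ((min (np k) (nm k) : ℝ) / n))
            * ((np k : ℝ) / n + (nm k : ℝ) / n))
      ≤ B * r / Real.sqrt n *
          ((K : ℝ)⁻¹ * ∑ k : Fin K, Real.sqrt (1 / ((min (np k) (nm k) : ℝ) / n)))) ∧
    (B * r / Real.sqrt n *
        ((K : ℝ)⁻¹ * ∑ k : Fin K,
          Real.sqrt (1 / ((min (np k) (nm k) : ℝ) / n)) * ((1 : ℝ) + 1))
      = 2 * B * r / Real.sqrt n *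
          ((K : ℝ)⁻¹ * ∑ k : Fin K, Real.sqrt (1 / ((min (np k) (nm k) : ℝ) / n)))) := by
  have hn₀ : (0 : ℝ) < n := by exact_mod_cast (by omega : 0 < n)
  have hΦ' (x : X) : ‖Φ x‖ ≤ r :=
    (sq_le_sq₀ (norm_nonneg _) hr.le).1 (real_inner_self_eq_norm_sq (Φ x) ▸ hΦ x)
  refine ⟨?_, ?_, ?_⟩
  · calc _ ≤ (K : ℝ)⁻¹ * ∑ k : Fin K,
            B * r / √n * (√(1 / ((min (np k) (nm k) : ℝ) / n)) * (ap k + am k)) := by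
          refine mul_le_mul_of_nonneg_left (sum_le_sum fun k _ => ?_) (by positivity)
          have hlabel := fracRad_label_le Φ hr.le hΦ' (hap k) (ham k) (xs k) (I k) (w k)
            (fun j => (hw k j).le) (hcover k) hB
          simp only [Fintype.card_fin] at hlabel
          refine hlabel.trans_eq ?_
          rw [hchrom k, Nat.cast_mul, sqrt_max_div_mul_eq (by exact_mod_cast hnp k)
            (by exact_mod_cast hnm k) hn₀]
          ring
      _ = _ := by
          rw [← mul_sum]
          ring
  · refine le_of_eq (congrArg _ (congrArg _ (sum_congr rfl fun k _ => ?_)))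
    rw [← add_div, ← Nat.cast_add, hsum k, div_self hn₀.ne', mul_one]
  · rw [← sum_mul]
    ring

/-- **Fractional Rademacher complexity of the kernel-based hypothesis class for
(reweighted) univariate losses**
(Lemma `lem:app_frac_rade_kernel_hypothesis_univariate_general` together with
Proposition `pro:app_frac_rade_kernel_hypothesis_univariate_specific`), with the
Rademacher expectations realized as finite averages over sign vectors. -/
theorem fracRad_kernel_univariate
    {H X : Type*} [NormedAddCommGroup H] [InnerProductSpace ℝ H]
    (Φ : X → H) (r : ℝ) (hr : 0 < r) (hΦ : ∀ x, ⟪Φ x, Φ x⟫ ≤ r ^ 2)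
    (K n : ℕ) (hK : 1 ≤ K) (hn : 2 ≤ n)
    (np nm : Fin K → ℕ) (hnp : ∀ k, 1 ≤ np k) (hnm : ∀ k, 1 ≤ nm k)
    (hsum : ∀ k, np k + nm k = n)
    (ap am : Fin K → ℝ) (hap : ∀ k, 0 ≤ ap k) (ham : ∀ k, 0 ≤ am k)
    (xs : (k : Fin K) → Fin (np k * nm k) → X × X)
    (J : Fin K → ℕ)
    (I : (k : Fin K) → Fin (J k) → Finset (Fin (np k * nm k)))
    (w : (k : Fin K) → Fin (J k) → ℝ) (hw : ∀ k j, 0 < w k j)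
    (hcover : ∀ k (i : Fin (np k * nm k)),
      ∑ j ∈ Finset.univ.filter (fun j => i ∈ I k j), w k j = 1)
    (hchrom : ∀ k, ∑ j, w k j = (max (np k) (nm k) : ℝ))
    (B : ℝ) (hB : 0 ≤ B) :
    ((K : ℝ)⁻¹ * ∑ k : Fin K,
        ((2 : ℝ) ^ (2 * (np k * nm k)))⁻¹ *
          ∑ σ : (Fin (np k * nm k) → Bool) × (Fin (np k * nm k) → Bool),
            ((np k * nm k : ℕ) : ℝ)⁻¹ * ∑ j : Fin (J k), w k j *
              ⨆ v : {v : H // ‖v‖ ≤ B}, ∑ i ∈ I k j,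
                ((if σ.1 i then (1 : ℝ) else -1) * (ap k * ⟪(v : H), Φ (xs k i).1⟫)
                  + (if σ.2 i then (1 : ℝ) else -1) * (am k * ⟪(v : H), Φ (xs k i).2⟫))
      ≤ B * r / Real.sqrt n *
          ((K : ℝ)⁻¹ * ∑ k : Fin K,
            Real.sqrt (1 / ((min (np k) (nm k) : ℝ) / n)) * (ap k + am k))) ∧
    (B * r / Real.sqrt n *
        ((K : ℝ)⁻¹ * ∑ k : Fin K,
          Real.sqrt (1 / ((min (np k) (nm k) : ℝ) / n))
            * ((np k : ℝ) / n + (nm k : ℝ) / n))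
      ≤ B * r / Real.sqrt n *
          ((K : ℝ)⁻¹ * ∑ k : Fin K, Real.sqrt (1 / ((min (np k) (nm k) : ℝ) / n)))) ∧
    (B * r / Real.sqrt n *
        ((K : ℝ)⁻¹ * ∑ k : Fin K,
          Real.sqrt (1 / ((min (np k) (nm k) : ℝ) / n)) * ((1 : ℝ) + 1))
      = 2 * B * r / Real.sqrt n *
          ((K : ℝ)⁻¹ * ∑ k : Fin K, Real.sqrt (1 / ((min (np k) (nm k) : ℝ) / n)))) :=
  fracRad_kernel_univariate_general Φ r hr hΦ K n hn np nm hnp hnm hsum ap am hap ham xs J I w hw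
    hcover hchrom B hB
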